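/- Let f = x1² − 2x1x2 + x2² − 2x1x3 − 2x2x3 + x3² ∈ ℂ[x1,x2,x3], the defining equation of the Cayley–Menger variety. Then the ED data isotropic locus equals the dual variety: DI(f) = V(f)* = V(x1x2 + x1x3 + x2x3); moreover DI(f) is strictly contained in V(f)* + (Q ∩ V(f)). -/

import Mathlib

open MvPolynomial Pointwise

/-- Gradient of a multivariate polynomial at a point. -/
noncomputable def grad {n : ℕ} (f : MvPolynomial (Fin n) ℂ) (x : Fin n → ℂ) : Fin n → ℂ :=
  fun i => eval x (pderiv i f)

/-- Zariski closure: zero locus of the ideal of all polynomials vanishing on `S`. -/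
def zclosure {σ : Type} (S : Set (σ → ℂ)) : Set (σ → ℂ) :=
  {x | ∀ p : MvPolynomial σ ℂ, (∀ s ∈ S, eval s p = 0) → eval x p = 0}

/-- Zero locus `V(f)`. -/
def Vp {n : ℕ} (f : MvPolynomial (Fin n) ℂ) : Set (Fin n → ℂ) := {x | eval x f = 0}

/-- Regular locus. -/
def RegL {n : ℕ} (f : MvPolynomial (Fin n) ℂ) : Set (Fin n → ℂ) :=
  {x | eval x f = 0 ∧ grad f x ≠ 0}

/-- Singular locus. -/
def SingL {n : ℕ} (f : MvPolynomial (Fin n) ℂ) : Set (Fin n → ℂ) :=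
  {x | eval x f = 0 ∧ grad f x = 0}

/-- ED correspondence: Zariski closure of pairs (u,x), x regular, u - x ∈ ℂ·∇f(x),
encoded as functions on `Fin n ⊕ Fin n`. -/
def EDcorr {n : ℕ} (f : MvPolynomial (Fin n) ℂ) : Set ((Fin n ⊕ Fin n) → ℂ) :=
  zclosure {w | ∃ u x : Fin n → ℂ, w = Sum.elim u x ∧ x ∈ RegL f ∧ ∃ t : ℂ, u - x = t • grad f x}

/-- ED data singular locus. -/
def DS {n : ℕ} (f : MvPolynomial (Fin n) ℂ) : Set (Fin n → ℂ) :=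
  {u | ∃ x, Sum.elim u x ∈ EDcorr f ∧ x ∈ SingL f}

/-- Dual variety. -/
def dualV {n : ℕ} (f : MvPolynomial (Fin n) ℂ) : Set (Fin n → ℂ) :=
  zclosure {y | ∃ (t : ℂ) (x : Fin n → ℂ), x ∈ RegL f ∧ y = t • grad f x}

/-- Isotropic quadric. -/
def isoQ (n : ℕ) : Set (Fin n → ℂ) := {x | ∑ i, (x i) ^ 2 = 0}

/-- ED data isotropic locus. -/
def DI {n : ℕ} (f : MvPolynomial (Fin n) ℂ) : Set (Fin n → ℂ) :=
  {u | ∃ x, Sum.elim u x ∈ EDcorr f ∧ x ∈ isoQ n ∩ Vp f}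

/-- Zariski-closed sets. -/
def IsZClosed {σ : Type} (S : Set (σ → ℂ)) : Prop := zclosure S = S

/-- Irreducibility with respect to Zariski-closed sets. -/
def IsZIrreducible {σ : Type} (S : Set (σ → ℂ)) : Prop :=
  S.Nonempty ∧ ∀ C₁ C₂ : Set (σ → ℂ), IsZClosed C₁ → IsZClosed C₂ →
    S ⊆ C₁ ∪ C₂ → S ⊆ C₁ ∨ S ⊆ C₂

/-- `C` is an irreducible component of `S`. -/
def IsIrredComponentOf {σ : Type} (C S : Set (σ → ℂ)) : Prop :=
  C ⊆ S ∧ IsZClosed C ∧ IsZIrreducible C ∧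
    ∀ C' : Set (σ → ℂ), IsZClosed C' → IsZIrreducible C' → C ⊆ C' → C' ⊆ S → C' = C

/-!
Write `f = |x|² - 2 e₂(x)` with `e₂ = x₀x₁ + x₀x₂ + x₁x₂`, so that
`∇f(x) = 4x - 2(x₀ + x₁ + x₂)` and `e₂(t ∇f(x)) = -4 t² f(x)`; hence `V(f)*` is the conic `e₂ = 0`.

Every point `(u, x)` of the ED correspondence satisfies `e(u - x) = 0` for each equation `e` of
the dual variety, and the `2 × 2` minors of `(u - x, ∇f(x))` vanish there. At an isotropic point
`x` of `V(f)` we have `x₀ + x₁ + x₂ = 0 = e₂(x)`, so `∇f(x) = 4x` and `u - x` is parallel to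
`x`; then `⟨x, u - x⟩ = 0` and `e₂(u) = e₂(u - x) = 0`. Conversely, since `f` is a quadratic
form, the pairs `(s x + t ∇f(x), s x)`, `s ≠ 0`, lie in the ED correspondence, so `(t ∇f(x), 0)`
lies in its closure and `0 ∈ Q ∩ V(f)` witnesses `t ∇f(x) ∈ DI(f)`.
-/

section ZariskiClosure

variable {σ : Type}

theorem subset_zclosure (S : Set (σ → ℂ)) : S ⊆ zclosure S :=
  fun _ hx _ hp => hp _ hx

theorem zclosure_Vp {n : ℕ} (p : MvPolynomial (Fin n) ℂ) : zclosure (Vp p) = Vp p :=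
  subset_antisymm (fun _ hx => hx p fun _ hs => hs) (subset_zclosure _)

theorem eval_aeval_polynomial (c : σ → Polynomial ℂ) (p : MvPolynomial σ ℂ) (s : ℂ) :
    (aeval c p).eval s = eval (fun i => (c i).eval s) p := by
  rw [← Polynomial.coe_aeval_eq_eval, ← AlgHom.comp_apply, comp_aeval]
  rfl

theorem mem_zclosure_of_add_smul_mem {S : Set (σ → ℂ)} (a b : σ → ℂ)
    (h : ∀ s : ℂ, s ≠ 0 → a + s • b ∈ S) : a ∈ zclosure S := by
  intro p hp
  let line : σ → Polynomial ℂ := fun i => Polynomial.C (a i) + Polynomial.C (b i) * Polynomial.X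
  have eval_line (s : ℂ) : (aeval line p).eval s = eval (a + s • b) p := by
    rw [eval_aeval_polynomial]
    congr 2
    funext i
    simp only [line, Polynomial.eval_add, Polynomial.eval_mul, Polynomial.eval_C,
      Polynomial.eval_X, Pi.add_apply, Pi.smul_apply, smul_eq_mul, mul_comm]
  have hline : aeval line p = 0 :=
    Polynomial.eq_zero_of_infinite_isRoot _ <| (Set.finite_singleton 0).infinite_compl.mono
      fun s hs => by simpa [Polynomial.IsRoot, eval_line] using hp _ (h s hs)
  simpa [eval_line] using congrArg (Polynomial.eval 0) hline

end ZariskiClosure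

section EDCorrespondence

variable {n : ℕ} (f : MvPolynomial (Fin n) ℂ)

def gradCone : Set (Fin n → ℂ) :=
  {y | ∃ (t : ℂ) (x : Fin n → ℂ), x ∈ RegL f ∧ y = t • grad f x}

theorem dualV_eq_zclosure_gradCone : dualV f = zclosure (gradCone f) := rfl

theorem eval_sumElim_aeval_sub (u x : Fin n → ℂ) (g : MvPolynomial (Fin n) ℂ) :
    eval (Sum.elim u x) (aeval (fun i => X (Sum.inl i) - X (Sum.inr i)) g) = eval (u - x) g := by
  change aeval (Sum.elim u x) (aeval _ g) = aeval (u - x) g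
  rw [← AlgHom.comp_apply, comp_aeval]
  congr 2
  funext i
  simp

variable {f}

theorem sub_mem_dualV_of_mem_EDcorr {u x : Fin n → ℂ} (h : Sum.elim u x ∈ EDcorr f) :
    u - x ∈ dualV f := by
  intro g hg
  rw [← eval_sumElim_aeval_sub]
  refine h _ ?_
  rintro _ ⟨u', x', rfl, hx', t, ht⟩
  rw [eval_sumElim_aeval_sub]
  exact hg _ ⟨t, x', hx', ht⟩

theorem sub_mul_grad_comm_of_mem_EDcorr {u x : Fin n → ℂ} (h : Sum.elim u x ∈ EDcorr f)
    (i j : Fin n) : (u i - x i) * grad f x j = (u j - x j) * grad f x i := by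
  have hminor := h ((X (Sum.inl i) - X (Sum.inr i)) * rename Sum.inr (pderiv j f) -
    (X (Sum.inl j) - X (Sum.inr j)) * rename Sum.inr (pderiv i f)) ?_
  · simpa [eval_rename, grad, sub_eq_zero] using hminor
  rintro _ ⟨u', x', rfl, -, t, ht⟩
  have hti (k : Fin n) : u' k - x' k = t * eval x' (pderiv k f) := congrFun ht k
  simp only [map_sub, map_mul, eval_X, eval_rename, Sum.elim_inl, Sum.elim_inr,
    Sum.elim_comp_inr, hti]
  ring

theorem sumElim_zero_mem_EDcorr_of_mem_gradCone
    (hf : ∀ (s : ℂ) (x : Fin n → ℂ), eval (s • x) f = s ^ 2 * eval x f)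
    (hgrad : ∀ (s : ℂ) (x : Fin n → ℂ), grad f (s • x) = s • grad f x)
    {y : Fin n → ℂ} (hy : y ∈ gradCone f) : Sum.elim y 0 ∈ EDcorr f := by
  obtain ⟨t, x, ⟨hfx, hgx⟩, rfl⟩ := hy
  refine mem_zclosure_of_add_smul_mem _ (Sum.elim x x) fun s hs => ?_
  refine ⟨t • grad f x + s • x, s • x, ?_, ⟨?_, ?_⟩, t / s, ?_⟩
  · funext w
    cases w <;> simp
  · rw [hf, hfx, mul_zero]
  · rw [hgrad]
    exact smul_ne_zero hs hgx
  · rw [hgrad, smul_smul, div_mul_cancel₀ _ hs, add_sub_cancel_right]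

end EDCorrespondence

section CayleyMenger

noncomputable def cayleyMenger : MvPolynomial (Fin 3) ℂ :=
  X 0 ^ 2 - 2 * X 0 * X 1 + X 1 ^ 2 - 2 * X 0 * X 2 - 2 * X 1 * X 2 + X 2 ^ 2

def dualConic : Set (Fin 3 → ℂ) := Vp (X 0 * X 1 + X 0 * X 2 + X 1 * X 2)

theorem mem_dualConic {y : Fin 3 → ℂ} :
    y ∈ dualConic ↔ y 0 * y 1 + y 0 * y 2 + y 1 * y 2 = 0 := by
  simp [dualConic, Vp]

theorem eval_cayleyMenger (x : Fin 3 → ℂ) :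
    eval x cayleyMenger =
      x 0 ^ 2 - 2 * x 0 * x 1 + x 1 ^ 2 - 2 * x 0 * x 2 - 2 * x 1 * x 2 + x 2 ^ 2 := by
  simp [cayleyMenger]

theorem grad_cayleyMenger (x : Fin 3 → ℂ) (i : Fin 3) :
    grad cayleyMenger x i = 4 * x i - 2 * (x 0 + x 1 + x 2) := by
  have pderiv_two (j : Fin 3) : pderiv j (2 : MvPolynomial (Fin 3) ℂ) = 0 := by
    rw [← map_ofNat C 2, pderiv_C]
  simp only [grad, cayleyMenger, pow_two, map_add, map_sub, map_mul, Derivation.leibniz, pderiv_X,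
    pderiv_two, Pi.single_apply, smul_eq_mul, eval_X, eval_ofNat]
  fin_cases i <;>
    simp only [Fin.zero_eta, Fin.mk_one, Fin.reduceFinMk, Fin.reduceEq, ↓reduceIte, map_one,
      map_zero, mul_one, mul_zero, add_zero, zero_add, sub_zero, zero_sub] <;>
    ring

theorem eval_smul_cayleyMenger (s : ℂ) (x : Fin 3 → ℂ) :
    eval (s • x) cayleyMenger = s ^ 2 * eval x cayleyMenger := by
  simp only [eval_cayleyMenger, Pi.smul_apply, smul_eq_mul]
  ring

theorem grad_smul_cayleyMenger (s : ℂ) (x : Fin 3 → ℂ) :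
    grad cayleyMenger (s • x) = s • grad cayleyMenger x := by
  funext i
  simp only [grad_cayleyMenger, Pi.smul_apply, smul_eq_mul]
  ring

/-- Every point of the conic is a gradient: `∇f((y - (y₀ + y₁ + y₂))/4) = y`. -/
theorem gradCone_cayleyMenger : gradCone cayleyMenger = dualConic := by
  ext y
  rw [mem_dualConic]
  constructor
  · rintro ⟨t, x, ⟨hfx, -⟩, rfl⟩
    rw [eval_cayleyMenger] at hfx
    simp only [Pi.smul_apply, smul_eq_mul, grad_cayleyMenger]
    linear_combination (-4 * t ^ 2) * hfx
  · intro hy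
    by_cases hy0 : y = 0
    · refine ⟨0, ![0, -1, -1], ⟨?_, fun h => ?_⟩, by simp [hy0]⟩
      · norm_num [eval_cayleyMenger, Matrix.cons_val_two, Matrix.tail_cons, Matrix.head_cons]
      · have := congrFun h 0
        norm_num [grad_cayleyMenger, Matrix.cons_val_two, Matrix.tail_cons, Matrix.head_cons] at this
    · refine ⟨1, fun i => (y i - (y 0 + y 1 + y 2)) / 4, ⟨?_, fun h => hy0 ?_⟩, ?_⟩
      · rw [eval_cayleyMenger]
        linear_combination (-1 / 4 : ℂ) * hy
      · funext i
        have := congrFun h i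
        simp only [grad_cayleyMenger, Pi.zero_apply] at this ⊢
        linear_combination this
      · funext i
        rw [one_smul, grad_cayleyMenger]
        ring

theorem dualV_cayleyMenger : dualV cayleyMenger = dualConic := by
  rw [dualV_eq_zclosure_gradCone, gradCone_cayleyMenger, dualConic, zclosure_Vp]

theorem sum_eq_zero_and_sum_sq_eq_zero_of_mem_isoQ_inter_Vp {x : Fin 3 → ℂ}
    (hx : x ∈ isoQ 3 ∩ Vp cayleyMenger) :
    x 0 + x 1 + x 2 = 0 ∧ x 0 ^ 2 + x 1 ^ 2 + x 2 ^ 2 = 0 := by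
  obtain ⟨hQ, hV⟩ := hx
  simp only [isoQ, Vp, Set.mem_ofPred_eq, Fin.sum_univ_three, eval_cayleyMenger] at hQ hV
  refine ⟨pow_eq_zero_iff two_ne_zero |>.mp ?_, hQ⟩
  linear_combination 2 * hQ - hV

theorem zero_mem_isoQ_inter_Vp_cayleyMenger : (0 : Fin 3 → ℂ) ∈ isoQ 3 ∩ Vp cayleyMenger := by
  simp [isoQ, Vp, eval_cayleyMenger]

theorem DI_cayleyMenger_subset : DI cayleyMenger ⊆ dualConic := by
  rintro u ⟨x, hE, hx⟩
  obtain ⟨hs, hq⟩ := sum_eq_zero_and_sum_sq_eq_zero_of_mem_isoQ_inter_Vp hx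
  have hv : u - x ∈ dualConic := dualV_cayleyMenger ▸ sub_mem_dualV_of_mem_EDcorr hE
  simp only [mem_dualConic, Pi.sub_apply] at hv ⊢
  have hpar (i j : Fin 3) : (u i - x i) * x j = (u j - x j) * x i := by
    have := sub_mul_grad_comm_of_mem_EDcorr hE i j
    simp only [grad_cayleyMenger, hs] at this
    linear_combination this / 4
  have hinner_mul (j : Fin 3) : (∑ i, x i * (u i - x i)) * x j = 0 := by
    simp only [Fin.sum_univ_three]
    linear_combination x 0 * hpar 0 j + x 1 * hpar 1 j + x 2 * hpar 2 j + (u j - x j) * hq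
  have hinner : ∑ i, x i * (u i - x i) = 0 := by
    refine pow_eq_zero_iff two_ne_zero |>.mp ?_
    rw [pow_two]
    nth_rw 2 [Fin.sum_univ_three]
    linear_combination
      (u 0 - x 0) * hinner_mul 0 + (u 1 - x 1) * hinner_mul 1 + (u 2 - x 2) * hinner_mul 2
  rw [Fin.sum_univ_three] at hinner
  linear_combination hv - hinner + (u 0 + u 1 + u 2 - (x 0 + x 1 + x 2) / 2) * hs - hq / 2

theorem dualConic_subset_DI : dualConic ⊆ DI cayleyMenger := fun _ hu =>
  ⟨0, sumElim_zero_mem_EDcorr_of_mem_gradCone eval_smul_cayleyMenger grad_smul_cayleyMenger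
    (gradCone_cayleyMenger ▸ hu), zero_mem_isoQ_inter_Vp_cayleyMenger⟩

/-- The points of `Q ∩ V(f)` are the multiples of `(1, ζ, ζ²)`, `ζ` a primitive cube root of
unity; translating one of them by `(1, 0, 0) ∈ V(f)*` leaves the conic. -/
theorem dualConic_ssubset_add_isoQ_inter_Vp :
    dualConic ⊂ dualConic + (isoQ 3 ∩ Vp cayleyMenger) := by
  refine (Set.ssubset_iff_of_subset fun y hy => ?_).mpr ?_
  · simpa using Set.add_mem_add hy zero_mem_isoQ_inter_Vp_cayleyMenger
  obtain ⟨r, hr⟩ := IsAlgClosed.exists_eq_mul_self (-3 : ℂ)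
  have hζ : ((-1 + r) / 2) ^ 2 + (-1 + r) / 2 + 1 = 0 := by linear_combination (-1 / 4 : ℂ) * hr
  set ζ := (-1 + r) / 2
  refine ⟨![1, 0, 0] + ![1, ζ, ζ ^ 2], Set.add_mem_add ?_ ⟨?_, ?_⟩, fun hmem => ?_⟩
  · simp [mem_dualConic]
  · simp only [isoQ, Set.mem_ofPred_eq, Fin.sum_univ_three, Matrix.cons_val_zero,
      Matrix.cons_val_one, Matrix.cons_val, one_pow]
    linear_combination (ζ ^ 2 - ζ + 1) * hζ
  · simp only [Vp, Set.mem_ofPred_eq, eval_cayleyMenger, Matrix.cons_val_zero,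
      Matrix.cons_val_one, Matrix.cons_val, one_pow, mul_one]
    linear_combination (ζ ^ 2 - 3 * ζ + 1) * hζ
  · rw [mem_dualConic] at hmem
    simp only [Pi.add_apply, Matrix.cons_val_zero, Matrix.cons_val_one, Matrix.cons_val,
      zero_add] at hmem
    exact one_ne_zero (by linear_combination (ζ + 1) * hζ - hmem : (1 : ℂ) = 0)

end CayleyMenger

/-- For the Cayley–Menger variety `f = x₁² - 2x₁x₂ + x₂² - 2x₁x₃ - 2x₂x₃ + x₃²`,
the ED data isotropic locus equals the dual variety `V(x₁x₂ + x₁x₃ + x₂x₃)`, and it is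
strictly contained in `V(f)* + (Q ∩ V(f))`. -/
theorem DI_cayley_menger :
    DI (X 0 ^ 2 - 2 * X 0 * X 1 + X 1 ^ 2 - 2 * X 0 * X 2 - 2 * X 1 * X 2 + X 2 ^ 2 :
        MvPolynomial (Fin 3) ℂ) =
      dualV (X 0 ^ 2 - 2 * X 0 * X 1 + X 1 ^ 2 - 2 * X 0 * X 2 - 2 * X 1 * X 2 + X 2 ^ 2 :
        MvPolynomial (Fin 3) ℂ) ∧
    dualV (X 0 ^ 2 - 2 * X 0 * X 1 + X 1 ^ 2 - 2 * X 0 * X 2 - 2 * X 1 * X 2 + X 2 ^ 2 :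
        MvPolynomial (Fin 3) ℂ) =
      {y : Fin 3 → ℂ | y 0 * y 1 + y 0 * y 2 + y 1 * y 2 = 0} ∧
    DI (X 0 ^ 2 - 2 * X 0 * X 1 + X 1 ^ 2 - 2 * X 0 * X 2 - 2 * X 1 * X 2 + X 2 ^ 2 :
        MvPolynomial (Fin 3) ℂ) ⊂
      dualV (X 0 ^ 2 - 2 * X 0 * X 1 + X 1 ^ 2 - 2 * X 0 * X 2 - 2 * X 1 * X 2 + X 2 ^ 2 :
          MvPolynomial (Fin 3) ℂ) +
        (isoQ 3 ∩ Vp (X 0 ^ 2 - 2 * X 0 * X 1 + X 1 ^ 2 - 2 * X 0 * X 2 - 2 * X 1 * X 2 + X 2 ^ 2 :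
          MvPolynomial (Fin 3) ℂ)) := by
  have hDI : DI cayleyMenger = dualConic := DI_cayleyMenger_subset.antisymm dualConic_subset_DI
  have hconic : {y : Fin 3 → ℂ | y 0 * y 1 + y 0 * y 2 + y 1 * y 2 = 0} = dualConic :=
    Set.ext fun _ => mem_dualConic.symm
  change DI cayleyMenger = dualV cayleyMenger ∧ dualV cayleyMenger = _ ∧
    DI cayleyMenger ⊂ dualV cayleyMenger + (isoQ 3 ∩ Vp cayleyMenger)
  rw [hDI, dualV_cayleyMenger, hconic]
  exact ⟨rfl, rfl, dualConic_ssubset_add_isoQ_inter_Vp⟩
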